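/- Let n ≥ 2 and let B : Fin n → Fin n → ℤ be skew-symmetric (the signed adjacency matrix of a quiver without loops or oriented 2-cycles). Fix a vertex j, set a_i = max(B i j, 0) and b_i = max(−B i j, 0) for i ≠ j, and let P = ∏_{i ≠ j} x_i^{a_i} + ∏_{i ≠ j} x_i^{b_i}, a polynomial in the variables x_i with i ≠ j. Let ε assign a value in {1, −1} to each i ≠ j such that Σ_{i ≠ j, ε i = −1} |B i j| is odd. Then for every element y of the Laurent subring ℤ[x₁^{±1},…,x_n^{±1}] of the field of fractions K of ℤ[x₁,…,x_n] such that the image of y under the ring homomorphism fixing x_i (i ≠ j) and sending x_j to P/x_j again lies in the Laurent subring, the evaluation of y at x_i = ε i for all i ≠ j is a polynomial in x_j with integer coefficients (i.e. lies in the polynomial subring ℤ[x_j] of ℚ(x_j)). -/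

import Mathlib

/-- The ambient field: the field of fractions of `ℤ[x₁, …, xₙ]`. -/
abbrev Kk (n : ℕ) : Type := FractionRing (MvPolynomial (Fin n) ℤ)

/-- The image of the `i`-th variable in the field of fractions. -/
noncomputable def XX (n : ℕ) (i : Fin n) : Kk n :=
  algebraMap (MvPolynomial (Fin n) ℤ) (Kk n) (MvPolynomial.X i)

/-- The Laurent subring `ℤ[x₁^{±1}, …, xₙ^{±1}]` of `Kk n`. -/
noncomputable def LL (n : ℕ) : Subring (Kk n) :=
  Subring.closure (Set.range (XX n) ∪ Set.range fun i => (XX n i)⁻¹)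

/-- The exchange polynomial at the vertex `j` of the quiver with signed
adjacency matrix `B`: here `aᵢ = max (B i j) 0 = (B i j).toNat` and
`bᵢ = max (-B i j) 0 = (-B i j).toNat`, and
`P = ∏_{i ≠ j} xᵢ^{aᵢ} + ∏_{i ≠ j} xᵢ^{bᵢ}`. -/
noncomputable def exchangePoly (n : ℕ) (B : Fin n → Fin n → ℤ) (j : Fin n) :
    MvPolynomial (Fin n) ℤ :=
  (∏ i ∈ Finset.univ.erase j, MvPolynomial.X i ^ (B i j).toNat) +
    ∏ i ∈ Finset.univ.erase j, MvPolynomial.X i ^ (-B i j).toNat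

/-- The field of fractions `ℚ(x_j)` of `ℤ[x_j]`. -/
abbrev Ft : Type := FractionRing (Polynomial ℤ)

/-- The image of the variable in `ℚ(x_j)`. -/
noncomputable def tF : Ft := algebraMap (Polynomial ℤ) Ft Polynomial.X

set_option maxHeartbeats 1600000
set_option synthInstance.maxHeartbeats 1000000

namespace Stmt4Aux

open MvPolynomial

/-- Polynomials land in the Laurent subring. -/
lemma algebraMap_mem_LL (n : ℕ) (f : MvPolynomial (Fin n) ℤ) :
    algebraMap (MvPolynomial (Fin n) ℤ) (Kk n) f ∈ LL n := by
  induction f using MvPolynomial.induction_on with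
  | C a =>
      have : algebraMap (MvPolynomial (Fin n) ℤ) (Kk n) (C a) = ((a : ℤ) : Kk n) := by
        simpa using
          map_intCast ((algebraMap (MvPolynomial (Fin n) ℤ) (Kk n)).comp
            (C : ℤ →+* MvPolynomial (Fin n) ℤ)) a
      rw [this]
      exact intCast_mem _ a
  | add p q hp hq => rw [map_add]; exact add_mem hp hq
  | mul_X p i hp =>
      rw [map_mul]
      exact mul_mem hp (Subring.subset_closure (Or.inl ⟨i, rfl⟩))

/-- The canonical ring hom from polynomials to the Laurent subring. -/
noncomputable def toLL (n : ℕ) : MvPolynomial (Fin n) ℤ →+* LL n :=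
  RingHom.codRestrict (algebraMap (MvPolynomial (Fin n) ℤ) (Kk n)) (LL n)
    (algebraMap_mem_LL n)

lemma coe_toLL (n : ℕ) (f : MvPolynomial (Fin n) ℤ) :
    ((toLL n f : LL n) : Kk n) = algebraMap (MvPolynomial (Fin n) ℤ) (Kk n) f := rfl

/-- Every Laurent polynomial is a polynomial divided by a power of `∏ xᵢ`. -/
lemma repLL (n : ℕ) (z : Kk n) (hz : z ∈ LL n) :
    ∃ (f : MvPolynomial (Fin n) ℤ) (k : ℕ),
      z * (algebraMap (MvPolynomial (Fin n) ℤ) (Kk n) (∏ i, X i)) ^ k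
        = algebraMap (MvPolynomial (Fin n) ℤ) (Kk n) f := by
  have amInj : Function.Injective (algebraMap (MvPolynomial (Fin n) ℤ) (Kk n)) :=
    IsFractionRing.injective _ _
  set am := algebraMap (MvPolynomial (Fin n) ℤ) (Kk n) with ham
  rw [LL] at hz
  induction hz using Subring.closure_induction with
  | mem x hx =>
      rcases hx with ⟨i, rfl⟩ | ⟨i, rfl⟩
      · exact ⟨X i, 0, by simp [XX, ham]⟩
      · refine ⟨∏ l ∈ Finset.univ.erase i, X l, 1, ?_⟩
        have h1 : am (∏ l, X l) = XX n i * am (∏ l ∈ Finset.univ.erase i, X l) := by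
          rw [← Finset.mul_prod_erase Finset.univ X (Finset.mem_univ i), map_mul]
          rfl
        have hXne : XX n i ≠ 0 := by
          intro h
          exact MvPolynomial.X_ne_zero (R := ℤ) i
            (amInj (show am (X i) = am 0 by rw [map_zero]; exact h))
        rw [pow_one, h1, ← mul_assoc, inv_mul_cancel₀ hXne, one_mul]
  | zero => exact ⟨0, 0, by simp⟩
  | one => exact ⟨1, 0, by simp⟩
  | add x y hx hy ihx ihy =>
      obtain ⟨f1, k1, h1⟩ := ihx
      obtain ⟨f2, k2, h2⟩ := ihy
      refine ⟨f1 * (∏ i, X i) ^ k2 + f2 * (∏ i, X i) ^ k1, k1 + k2, ?_⟩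
      rw [map_add, map_mul, map_mul, map_pow, map_pow]
      linear_combination (am (∏ i, X i)) ^ k2 * h1 + (am (∏ i, X i)) ^ k1 * h2
  | neg x hx ihx =>
      obtain ⟨f1, k1, h1⟩ := ihx
      exact ⟨-f1, k1, by rw [map_neg]; linear_combination -h1⟩
  | mul x y hx hy ihx ihy =>
      obtain ⟨f1, k1, h1⟩ := ihx
      obtain ⟨f2, k2, h2⟩ := ihy
      refine ⟨f1 * f2, k1 + k2, ?_⟩
      rw [map_mul]
      linear_combination ((am (∏ i, X i)) ^ k2 * y) * h1 + am f1 * h2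

/-- The parity computation. -/
lemma prod_eps_natAbs (n : ℕ) (j : Fin n) (B : Fin n → Fin n → ℤ) (ε : Fin n → ℤ)
    (hε : ∀ i, i ≠ j → ε i = 1 ∨ ε i = -1)
    (hodd : Odd (∑ i ∈ (Finset.univ.erase j).filter (fun i => ε i = -1), (B i j).natAbs)) :
    ∏ i ∈ Finset.univ.erase j, ε i ^ (B i j).natAbs = -1 := by
  classical
  rw [← Finset.prod_filter_mul_prod_filter_not (Finset.univ.erase j) (fun i => ε i = -1)]
  have h2 : ∏ i ∈ (Finset.univ.erase j).filter (fun i => ¬ε i = -1),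
      ε i ^ (B i j).natAbs = 1 := by
    apply Finset.prod_eq_one
    intro i hi
    rw [Finset.mem_filter] at hi
    rcases hε i (Finset.mem_erase.mp hi.1).1 with h | h
    · rw [h, one_pow]
    · exact absurd h hi.2
  have h1 : ∏ i ∈ (Finset.univ.erase j).filter (fun i => ε i = -1),
      ε i ^ (B i j).natAbs
      = (-1 : ℤ) ^ ∑ i ∈ (Finset.univ.erase j).filter (fun i => ε i = -1), (B i j).natAbs := by
    rw [← Finset.prod_pow_eq_pow_sum]
    apply Finset.prod_congr rfl
    intro i hi
    rw [(Finset.mem_filter.mp hi).2]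
  rw [h1, h2, mul_one, hodd.neg_one_pow]

/-- Transport to polynomials in `x_j` over `ℤ[xᵢ : i ≠ j]`. -/
noncomputable def Φ (n : ℕ) (j : Fin n) :
    MvPolynomial (Fin n) ℤ ≃+* Polynomial (MvPolynomial {i : Fin n // i ≠ j} ℤ) :=
  ((renameEquiv ℤ (Equiv.optionSubtypeNe j).symm).trans
    (optionEquivLeft ℤ {i : Fin n // i ≠ j})).toRingEquiv

lemma Φ_X_ne (n : ℕ) (j : Fin n) {i : Fin n} (hi : i ≠ j) :
    Φ n j (X i) = Polynomial.C (X ⟨i, hi⟩) := by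
  show ((renameEquiv ℤ (Equiv.optionSubtypeNe j).symm).trans
    (optionEquivLeft ℤ {i : Fin n // i ≠ j})) (X i) = _
  rw [AlgEquiv.trans_apply, renameEquiv_apply, rename_X,
    Equiv.optionSubtypeNe_symm_of_ne hi, optionEquivLeft_X_some]

lemma Φ_X_self (n : ℕ) (j : Fin n) : Φ n j (X j) = Polynomial.X := by
  show ((renameEquiv ℤ (Equiv.optionSubtypeNe j).symm).trans
    (optionEquivLeft ℤ {i : Fin n // i ≠ j})) (X j) = _
  rw [AlgEquiv.trans_apply, renameEquiv_apply, rename_X,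
    Equiv.optionSubtypeNe_symm_self, optionEquivLeft_X_none]

end Stmt4Aux

/-- Let `n ≥ 2`, let `B` be skew-symmetric, fix a vertex `j`,
and let `P` be the exchange polynomial at `j`.  Let `ε` assign `1` or `-1` to
each `i ≠ j` in such a way that `Σ_{i ≠ j, ε i = -1} |B i j|` is odd.  Let `φ`
be the (unique) ring homomorphism on the Laurent subring fixing each `xᵢ`
(`i ≠ j`) and sending `x_j ↦ P / x_j`, and let `ev` be the (unique) ring
homomorphism to `ℚ(x_j)` fixing `x_j` and sending `xᵢ ↦ ε i` for `i ≠ j`.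
Then every Laurent polynomial `y` whose image under `φ` is again a Laurent
polynomial evaluates under `ev` to a polynomial in `ℤ[x_j]`. -/
theorem stmt_4 (n : ℕ) (hn : 2 ≤ n)
    (B : Fin n → Fin n → ℤ) (hskew : ∀ i k, B i k = -B k i)
    (j : Fin n)
    (ε : Fin n → ℤ) (hε : ∀ i, i ≠ j → ε i = 1 ∨ ε i = -1)
    (hodd : Odd (∑ i ∈ (Finset.univ.erase j).filter (fun i => ε i = -1),
      (B i j).natAbs))
    (φ : LL n →+* Kk n)
    (hφx : ∀ (i : Fin n), i ≠ j → ∀ z : LL n,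
      (z : Kk n) = XX n i → φ z = XX n i)
    (hφj : ∀ z : LL n, (z : Kk n) = XX n j →
      (φ z : Kk n) =
        algebraMap (MvPolynomial (Fin n) ℤ) (Kk n) (exchangePoly n B j) / XX n j)
    (ev : LL n →+* Ft)
    (hevj : ∀ z : LL n, (z : Kk n) = XX n j → ev z = tF)
    (hevx : ∀ (i : Fin n), i ≠ j → ∀ z : LL n,
      (z : Kk n) = XX n i → ev z = (ε i : Ft)) :
    ∀ y : LL n, (φ y : Kk n) ∈ LL n →
      ev y ∈ (algebraMap (Polynomial ℤ) Ft).range := by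
  classical
  intro y hy
  open MvPolynomial Stmt4Aux in
  -- Notation
  set am := algebraMap (MvPolynomial (Fin n) ℤ) (Kk n) with ham
  have amInj : Function.Injective am := IsFractionRing.injective _ _
  set Xp : MvPolynomial (Fin n) ℤ := ∏ i, X i with hXp_def
  set Xp' : MvPolynomial (Fin n) ℤ := ∏ i ∈ Finset.univ.erase j, X i with hXp'_def
  have hXp_split : Xp = X j * Xp' := by
    rw [hXp_def, hXp'_def, Finset.mul_prod_erase Finset.univ X (Finset.mem_univ j)]
  set p : MvPolynomial (Fin n) ℤ := exchangePoly n B j with hp_def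
  set t : Kk n := XX n j with ht_def
  have ht : t ≠ 0 := by
    intro h
    exact MvPolynomial.X_ne_zero (R := ℤ) j
      (amInj (show am (X j) = am 0 by rw [map_zero]; exact h))
  -- The variable-killing map ξ
  set ξ : Fin n → MvPolynomial {i : Fin n // i ≠ j} ℤ :=
    fun i => if h : i ≠ j then X ⟨i, h⟩ else 0 with hξ_def
  have hξ : ∀ i (h : i ≠ j), ξ i = X ⟨i, h⟩ := fun i h => dif_pos h
  set s' : MvPolynomial {i : Fin n // i ≠ j} ℤ := ∏ i ∈ Finset.univ.erase j, ξ i with hs'_def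
  set P' : MvPolynomial {i : Fin n // i ≠ j} ℤ :=
    (∏ i ∈ Finset.univ.erase j, ξ i ^ (B i j).toNat) +
      ∏ i ∈ Finset.univ.erase j, ξ i ^ (-B i j).toNat with hP'_def
  -- Transport facts
  have hΦXne : ∀ i ∈ Finset.univ.erase j, Φ n j (X i) = Polynomial.C (ξ i) := by
    intro i hi
    have h : i ≠ j := (Finset.mem_erase.mp hi).1
    rw [Φ_X_ne n j h, hξ i h]
  have hΦXp' : Φ n j Xp' = Polynomial.C s' := by
    rw [hXp'_def, hs'_def, map_prod, map_prod]
    exact Finset.prod_congr rfl hΦXne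
  have hΦp : Φ n j p = Polynomial.C P' := by
    rw [hp_def, exchangePoly, hP'_def, map_add, map_prod, map_prod, map_add, map_prod, map_prod]
    congr 1
    · exact Finset.prod_congr rfl fun i hi => by rw [map_pow, map_pow, hΦXne i hi]
    · exact Finset.prod_congr rfl fun i hi => by rw [map_pow, map_pow, hΦXne i hi]
  -- Evaluation ring homs
  set Es : MvPolynomial {i : Fin n // i ≠ j} ℤ →+* ℤ :=
    MvPolynomial.eval (fun i' => ε i'.1) with hEs_def
  have hEsξ : ∀ i ∈ Finset.univ.erase j, Es (ξ i) = ε i := by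
    intro i hi
    have h : i ≠ j := (Finset.mem_erase.mp hi).1
    rw [hξ i h, hEs_def, MvPolynomial.eval_X]
  -- `Es P' = 0` by the parity hypothesis
  have hab : ∀ b : ℤ, b.toNat + (-b).toNat = b.natAbs := by intro b; omega
  set u1 : ℤ := ∏ i ∈ Finset.univ.erase j, ε i ^ (B i j).toNat with hu1_def
  set u2 : ℤ := ∏ i ∈ Finset.univ.erase j, ε i ^ (-B i j).toNat with hu2_def
  have hu1u2 : u1 * u2 = -1 := by
    rw [hu1_def, hu2_def, ← Finset.prod_mul_distrib]
    rw [← prod_eps_natAbs n j B ε hε hodd]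
    exact Finset.prod_congr rfl fun i _ => by rw [← pow_add, hab]
  have hu1sq : u1 * u1 = 1 := by
    rw [hu1_def, ← Finset.prod_mul_distrib]
    apply Finset.prod_eq_one
    intro i hi
    rw [← pow_add, ← two_mul, pow_mul]
    rcases hε i (Finset.mem_erase.mp hi).1 with h | h <;> rw [h] <;> norm_num
  have hEsP' : Es P' = 0 := by
    rw [hP'_def, map_add, map_prod, map_prod]
    have e1 : ∏ i ∈ Finset.univ.erase j, Es (ξ i ^ (B i j).toNat) = u1 :=
      Finset.prod_congr rfl fun i hi => by rw [map_pow, hEsξ i hi]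
    have e2 : ∏ i ∈ Finset.univ.erase j, Es (ξ i ^ (-B i j).toNat) = u2 :=
      Finset.prod_congr rfl fun i hi => by rw [map_pow, hEsξ i hi]
    rw [e1, e2]
    have : u2 = -u1 := by
      calc u2 = (u1 * u1) * u2 := by rw [hu1sq, one_mul]
        _ = u1 * (u1 * u2) := by ring
        _ = -u1 := by rw [hu1u2]; ring
    rw [this]; ring
  -- `u := Es s'` is a unit
  set u : ℤ := Es s' with hu_def
  have hEss' : u = ∏ i ∈ Finset.univ.erase j, ε i := by
    rw [hu_def, hs'_def, map_prod]
    exact Finset.prod_congr rfl hEsξ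
  have huu : u * u = 1 := by
    rw [hEss', ← Finset.prod_mul_distrib]
    apply Finset.prod_eq_one
    intro i hi
    rcases hε i (Finset.mem_erase.mp hi).1 with h | h <;> rw [h] <;> norm_num
  have hu0 : u ≠ 0 := by intro h; rw [h, mul_zero] at huu; exact one_ne_zero huu.symm
  -- `P' ≠ 0`
  have hP'0 : P' ≠ 0 := by
    intro h
    have := congrArg (MvPolynomial.eval (fun _ => (1 : ℤ))) h
    rw [hP'_def, map_zero, map_add, map_prod, map_prod] at this
    have e1 : ∀ i ∈ Finset.univ.erase j,
        MvPolynomial.eval (fun _ => (1 : ℤ)) (ξ i ^ (B i j).toNat) = 1 := by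
      intro i hi
      rw [hξ i (Finset.mem_erase.mp hi).1, map_pow, MvPolynomial.eval_X, one_pow]
    have e2 : ∀ i ∈ Finset.univ.erase j,
        MvPolynomial.eval (fun _ => (1 : ℤ)) (ξ i ^ (-B i j).toNat) = 1 := by
      intro i hi
      rw [hξ i (Finset.mem_erase.mp hi).1, map_pow, MvPolynomial.eval_X, one_pow]
    rw [Finset.prod_eq_one e1, Finset.prod_eq_one e2] at this
    norm_num at this
  -- Representations of `y` and `φ y`
  obtain ⟨f, k, hf⟩ := repLL n (y : Kk n) y.2
  obtain ⟨g, k', hg⟩ := repLL n (φ y : Kk n) hy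
  rw [← hXp_def, ← ham] at hf hg
  -- Lift the representation of `y` to `LL n`
  have hfL : y * (toLL n Xp) ^ k = toLL n f := by
    apply Subtype.ext
    push_cast
    rw [coe_toLL, coe_toLL]
    exact hf
  -- substitution hom
  set σA : MvPolynomial (Fin n) ℤ →+* Kk n := φ.comp (toLL n) with hσA_def
  set β : Polynomial (MvPolynomial {i : Fin n // i ≠ j} ℤ) →+* Kk n :=
    am.comp ((Φ n j).symm : Polynomial (MvPolynomial {i : Fin n // i ≠ j} ℤ) →+* _)
    with hβ_def
  have hβ_apply : ∀ w, β w = am ((Φ n j).symm w) := fun w => rfl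
  have βinj : Function.Injective β := amInj.comp (Φ n j).symm.injective
  set σB : Polynomial (MvPolynomial {i : Fin n // i ≠ j} ℤ) →+* Kk n :=
    σA.comp ((Φ n j).symm : Polynomial (MvPolynomial {i : Fin n // i ≠ j} ℤ) →+* _)
    with hσB_def
  have hσB_apply : ∀ w, σB w = σA ((Φ n j).symm w) := fun w => rfl
  -- σB and β agree on constants
  have hσBC : ∀ s, σB (Polynomial.C s) = β (Polynomial.C s) := by
    have : σB.comp (Polynomial.C.comp MvPolynomial.C)
        = β.comp (Polynomial.C.comp MvPolynomial.C) := Subsingleton.elim _ _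
    have hext : σB.comp Polynomial.C = β.comp Polynomial.C := by
      apply MvPolynomial.ringHom_ext
      · intro r
        exact RingHom.congr_fun this r
      · intro i'
        have hC : (Polynomial.C (X i') :
            Polynomial (MvPolynomial {i : Fin n // i ≠ j} ℤ)) = Φ n j (X i'.1) :=
          (Φ_X_ne n j i'.2).symm
        show σB (Polynomial.C (X i')) = β (Polynomial.C (X i'))
        rw [hσB_apply, hβ_apply, hC, RingEquiv.symm_apply_apply]
        show φ (toLL n (X i'.1)) = am (X i'.1)
        exact hφx i'.1 i'.2 (toLL n (X i'.1)) rfl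
    intro s
    exact RingHom.congr_fun hext s
  have hβX : β Polynomial.X = t := by
    rw [hβ_apply, ← Φ_X_self n j, RingEquiv.symm_apply_apply]
    rfl
  have hσBX : σB Polynomial.X = am p / t := by
    rw [hσB_apply, ← Φ_X_self n j, RingEquiv.symm_apply_apply]
    exact hφj (toLL n (X j)) rfl
  have hβCs' : β (Polynomial.C s') = am Xp' := by
    rw [hβ_apply, ← hΦXp', RingEquiv.symm_apply_apply]
  have hβCP' : β (Polynomial.C P') = am p := by
    rw [hβ_apply, ← hΦp, RingEquiv.symm_apply_apply]
  have hσAXp' : σA Xp' = am Xp' := by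
    have : σA Xp' = σB (Polynomial.C s') := by
      rw [hσB_apply, ← hΦXp', RingEquiv.symm_apply_apply]
    rw [this, hσBC, hβCs']
  have hσAXj : σA (X j) = am p / t := by
    exact hφj (toLL n (X j)) rfl
  -- Apply φ to the representation
  set q := Φ n j f with hq_def
  have hσAf : σA f = σB q := by
    rw [hσB_apply, hq_def, RingEquiv.symm_apply_apply]
  have hK1 : φ y * ((am p / t) * am Xp') ^ k = σB q := by
    have := congrArg φ hfL
    rw [map_mul, map_pow] at this
    rw [← hσAf]
    have hXpσ : φ (toLL n Xp) = (am p / t) * am Xp' := by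
      have : φ (toLL n Xp) = σA Xp := rfl
      rw [this, hXp_split, map_mul, hσAXj, hσAXp']
    rw [← hXpσ]
    exact this
  have e1 : φ y * (am p) ^ k * (am Xp') ^ k = σB q * t ^ k := by
    have h2 : ((am p / t) * am Xp') ^ k * t ^ k = (am p) ^ k * (am Xp') ^ k := by
      rw [mul_pow, div_pow, mul_right_comm, div_mul_cancel₀ _ (pow_ne_zero k ht)]
    calc φ y * (am p) ^ k * (am Xp') ^ k
        = φ y * (((am p / t) * am Xp') ^ k * t ^ k) := by rw [h2]; ring
      _ = (φ y * ((am p / t) * am Xp') ^ k) * t ^ k := by ring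
      _ = σB q * t ^ k := by rw [hK1]
  have e2 : φ y * (am Xp' * t) ^ k' = am g := by
    have : am Xp = am Xp' * t := by
      rw [hXp_split, map_mul, mul_comm]; rfl
    rw [← this]; exact hg
  -- The reflected polynomial
  set D := q.natDegree with hD_def
  set F' : Polynomial (MvPolynomial {i : Fin n // i ≠ j} ℤ) :=
    ∑ d ∈ q.support, Polynomial.C (q.coeff d * P' ^ d) * Polynomial.X ^ (D - d)
    with hF'_def
  have lemC : σB q * t ^ D = β F' := by
    have hq_as : q = ∑ d ∈ q.support, Polynomial.C (q.coeff d) * Polynomial.X ^ d := by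
      conv_lhs => rw [q.as_sum_support]
      exact Finset.sum_congr rfl fun d _ => (Polynomial.C_mul_X_pow_eq_monomial).symm
    conv_lhs => rw [hq_as]
    rw [map_sum, Finset.sum_mul, hF'_def, map_sum]
    apply Finset.sum_congr rfl
    intro d hd
    have hdD : d ≤ D := Polynomial.le_natDegree_of_mem_supp d hd
    rw [map_mul, map_pow, hσBX, hσBC, map_mul, map_pow, hβX,
      Polynomial.C_mul, map_mul, Polynomial.C_pow, map_pow, hβCP']
    have hsplit : t ^ D = t ^ d * t ^ (D - d) := by
      rw [← pow_add]; congr 1; omega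
    rw [hsplit, div_pow, mul_assoc, ← mul_assoc ((am p) ^ d / t ^ d),
      div_mul_cancel₀ _ (pow_ne_zero d ht)]
    ring
  -- The master identity in `Polynomial S`
  have eq5 : Polynomial.C (s' ^ k * P' ^ k) * Φ n j g * Polynomial.X ^ D
      = Polynomial.C (s' ^ k') * F' * Polynomial.X ^ (k + k') := by
    apply βinj
    have hβg : β (Φ n j g) = am g := by rw [hβ_apply, RingEquiv.symm_apply_apply]
    simp only [Polynomial.C_mul, Polynomial.C_pow, map_mul, map_pow, hβX, hβg, hβCs', hβCP']
    linear_combination (t ^ D * (am Xp') ^ k' * t ^ k') * e1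
      - ((am Xp') ^ k * (am p) ^ k * t ^ D) * e2
      + (t ^ (k + k') * (am Xp') ^ k') * lemC
  -- Coefficient extraction: for `d < k`, `Es (q.coeff d) = 0`
  have hcoeff : ∀ d, d < k → Es (q.coeff d) = 0 := by
    intro d hdk
    by_cases hq0 : q.coeff d = 0
    · rw [hq0, map_zero]
    have hdsupp : d ∈ q.support := Polynomial.mem_support_iff.mpr hq0
    have hdD : d ≤ D := Polynomial.le_natDegree_of_mem_supp d hdsupp
    have hm : (k + k' - d) + D = (D - d) + (k + k') := by omega
    have hcoe := congrArg (fun r => Polynomial.coeff r ((k + k' - d) + D)) eq5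
    rw [Polynomial.coeff_mul_X_pow, Polynomial.coeff_C_mul, hm,
      Polynomial.coeff_mul_X_pow, Polynomial.coeff_C_mul] at hcoe
    have hFc : F'.coeff (D - d) = q.coeff d * P' ^ d := by
      rw [hF'_def, Polynomial.finset_sum_coeff]
      rw [Finset.sum_eq_single d]
      · rw [Polynomial.coeff_C_mul, Polynomial.coeff_X_pow, if_pos rfl, mul_one]
      · intro d' hd' hne
        have hd'D : d' ≤ D := Polynomial.le_natDegree_of_mem_supp d' hd'
        rw [Polynomial.coeff_C_mul, Polynomial.coeff_X_pow, if_neg (by omega), mul_zero]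
      · intro hd; exact absurd hdsupp hd
    rw [hFc] at hcoe
    -- cancel `P' ^ d`
    have hsplit : (P' : MvPolynomial {i : Fin n // i ≠ j} ℤ) ^ k
        = P' ^ d * P' ^ (k - d) := by
      rw [← pow_add]; congr 1; omega
    rw [hsplit] at hcoe
    have hkey : P' ^ d * (s' ^ k * (P' ^ (k - d) * (Φ n j g).coeff (k + k' - d)))
        = P' ^ d * (s' ^ k' * q.coeff d) := by linear_combination hcoe
    have hqd : s' ^ k * (P' ^ (k - d) * (Φ n j g).coeff (k + k' - d))
        = s' ^ k' * q.coeff d := mul_left_cancel₀ (pow_ne_zero d hP'0) hkey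
    have := congrArg Es hqd
    rw [map_mul, map_mul, map_mul, map_pow, map_pow, map_pow, hEsP',
      zero_pow (by omega : k - d ≠ 0), zero_mul, mul_zero] at this
    rcases mul_eq_zero.mp this.symm with h | h
    · exact absurd h (pow_ne_zero k' hu0)
    · exact h
  -- `X ^ k` divides the evaluation
  have hdvd : Polynomial.X ^ k ∣ q.map Es := by
    rw [Polynomial.X_pow_dvd_iff]
    intro d hd
    rw [Polynomial.coeff_map]
    exact hcoeff d hd
  obtain ⟨h, hh⟩ := hdvd
  -- Evaluation side
  set algFt := algebraMap (Polynomial ℤ) Ft with halgFt_def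
  set evA : MvPolynomial (Fin n) ℤ →+* Ft := ev.comp (toLL n) with hevA_def
  have hevA : ∀ f', evA f' = algFt ((Φ n j f').map Es) := by
    have hext : evA = ((algFt.comp (Polynomial.mapRingHom Es)).comp
        ((Φ n j : MvPolynomial (Fin n) ℤ →+* _))) := by
      apply MvPolynomial.ringHom_ext
      · intro r
        exact RingHom.congr_fun (Subsingleton.elim
          (evA.comp MvPolynomial.C)
          (((algFt.comp (Polynomial.mapRingHom Es)).comp
            ((Φ n j : MvPolynomial (Fin n) ℤ →+* _))).comp MvPolynomial.C)) r
      · intro i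
        by_cases hij : i = j
        · subst hij
          show evA (X i) = algFt ((Φ n i (X i)).map Es)
          rw [Φ_X_self, Polynomial.map_X]
          exact hevj (toLL n (X i)) rfl
        · show evA (X i) = algFt ((Φ n j (X i)).map Es)
          rw [Φ_X_ne n j hij, Polynomial.map_C]
          have : evA (X i) = ((ε i : ℤ) : Ft) := hevx i hij (toLL n (X i)) rfl
          rw [this, MvPolynomial.eval_X]
          have hC : (Polynomial.C (ε i) : Polynomial ℤ) = ((ε i : ℤ) : Polynomial ℤ) := by
            simp
          rw [hC, map_intCast]
    intro f'
    rw [hext]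
    rfl
  have hevy : ev y * (evA Xp) ^ k = evA f := by
    have := congrArg ev hfL
    rw [map_mul, map_pow] at this
    exact this
  have hΦXp : Φ n j Xp = Polynomial.X * Polynomial.C s' := by
    rw [hXp_split, map_mul, Φ_X_self, hΦXp']
  have hevXp : evA Xp = algFt (Polynomial.X * Polynomial.C u) := by
    rw [hevA, hΦXp, Polynomial.map_mul, Polynomial.map_X, Polynomial.map_C, hu_def]
  have hfinal : ev y * algFt (Polynomial.C (u ^ k)) = algFt h := by
    have hXk0 : algFt (Polynomial.X ^ k) ≠ 0 := by
      intro h0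
      exact pow_ne_zero k Polynomial.X_ne_zero
        (IsFractionRing.injective (Polynomial ℤ) Ft (by rw [map_zero]; exact h0))
    apply mul_left_cancel₀ hXk0
    have : evA f = algFt (Polynomial.X ^ k * h) := by
      rw [hevA f, ← hq_def, hh]
    calc algFt (Polynomial.X ^ k) * (ev y * algFt (Polynomial.C (u ^ k)))
        = ev y * algFt ((Polynomial.X * Polynomial.C u) ^ k) := by
          rw [mul_pow, map_mul, map_pow, map_pow]; ring
      _ = ev y * (evA Xp) ^ k := by rw [hevXp, map_pow]
      _ = evA f := hevy
      _ = algFt (Polynomial.X ^ k) * algFt h := by rw [this, map_mul]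
  refine ⟨h * Polynomial.C (u ^ k), ?_⟩
  have huk : (u ^ k) * (u ^ k) = 1 := by rw [← mul_pow, huu, one_pow]
  calc algFt (h * Polynomial.C (u ^ k))
      = algFt h * algFt (Polynomial.C (u ^ k)) := by rw [map_mul]
    _ = (ev y * algFt (Polynomial.C (u ^ k))) * algFt (Polynomial.C (u ^ k)) := by
        rw [hfinal]
    _ = ev y * algFt (Polynomial.C ((u ^ k) * (u ^ k))) := by
        rw [map_mul, map_mul]; ring
    _ = ev y := by rw [huk, map_one, map_one, mul_one]
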